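/- Let T be a triangulated category and let A and B be classes of objects of T. Define A ⋆ B to be the class of objects X of T for which there exists a distinguished triangle a → X → b → Σa with a ∈ A and b ∈ B, and define smd(A) to be the class of objects that are direct summands of objects of A (i.e. Y ∈ smd(A) iff there exist Y' and a ∈ A with Y ⊕ Y' ≅ a). Then smd( smd(A) ⋆ smd(B) ) = smd( A ⋆ B ). -/

import Mathlib

open CategoryTheory Category Limits Pretriangulated
open ZeroObject

variable (C : Type*) [Category C] [Preadditive C] [HasZeroObject C] [HasShift C ℤ]
  [∀ n : ℤ, (shiftFunctor C n).Additive] [Pretriangulated C] [IsTriangulated C]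
  [HasBinaryBiproducts C]

/-- `A ⋆ B` is the class of objects `X` admitting a distinguished triangle
`a ⟶ X ⟶ b ⟶ a⟦1⟧` with `a ∈ A` and `b ∈ B`. -/
def star (A B : Set C) : Set C :=
  {X | ∃ (a b : C) (u : a ⟶ X) (v : X ⟶ b) (w : b ⟶ a⟦(1:ℤ)⟧),
    a ∈ A ∧ b ∈ B ∧ Triangle.mk u v w ∈ distTriang C}

/-- `smd A` is the class of direct summands of objects of `A`. -/
def smd (A : Set C) : Set C :=
  {Y | ∃ (Y' a : C), a ∈ A ∧ Nonempty ((Y ⊞ Y') ≅ a)}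

section Aux

variable {C}

/-- Transport a distinguished triangle along isomorphisms of its three objects. -/
lemma dist_of_isos (T : Triangle C) (hT : T ∈ distTriang C) {a x b : C}
    (e₁ : T.obj₁ ≅ a) (e₂ : T.obj₂ ≅ x) (e₃ : T.obj₃ ≅ b) :
    Triangle.mk (e₁.inv ≫ T.mor₁ ≫ e₂.hom) (e₂.inv ≫ T.mor₂ ≫ e₃.hom)
      (e₃.inv ≫ T.mor₃ ≫ (shiftFunctor C (1:ℤ)).map e₁.hom) ∈ distTriang C := by
  refine isomorphic_distinguished _ hT _ ?_
  refine Triangle.isoMk _ _ e₁.symm e₂.symm e₃.symm ?_ ?_ ?_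
  · erw [assoc, assoc, Iso.hom_inv_id, comp_id]; rfl
  · erw [assoc, assoc, Iso.hom_inv_id, comp_id]; rfl
  · erw [assoc, assoc, ← Functor.map_comp, Iso.hom_inv_id, CategoryTheory.Functor.map_id, comp_id]; rfl

/-- An auxiliary isomorphism between a `WalkingPair`-indexed product and a binary
biproduct. -/
noncomputable def piPairIso (f : WalkingPair → C) :
    (∏ᶜ f) ≅ f WalkingPair.left ⊞ f WalkingPair.right :=
  HasLimit.isoOfNatIso (Discrete.natIso (fun j => by
    obtain ⟨j⟩ := j
    cases j
    · exact Iso.refl (f WalkingPair.left)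
    · exact Iso.refl (f WalkingPair.right))) ≪≫
  (biprod.isoProd (f WalkingPair.left) (f WalkingPair.right)).symm

/-- The direct sum of two distinguished triangles is distinguished (in the weak form of
existence of a distinguished triangle whose objects are the biproducts). -/
lemma biprodTriangle_distinguished (T₁ T₂ : Triangle C)
    (h₁ : T₁ ∈ distTriang C) (h₂ : T₂ ∈ distTriang C) :
    ∃ T ∈ distTriang C, Nonempty (T.obj₁ ≅ T₁.obj₁ ⊞ T₂.obj₁) ∧
      Nonempty (T.obj₂ ≅ T₁.obj₂ ⊞ T₂.obj₂) ∧ Nonempty (T.obj₃ ≅ T₁.obj₃ ⊞ T₂.obj₃) := by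
  let F : WalkingPair → Triangle C := fun j => WalkingPair.casesOn j T₁ T₂
  have hF : ∀ j, F j ∈ distTriang C := by rintro (_|_) <;> assumption
  exact ⟨productTriangle F, productTriangle_distinguished F hF,
    ⟨piPairIso (fun j => (F j).obj₁)⟩, ⟨piPairIso (fun j => (F j).obj₂)⟩,
    ⟨piPairIso (fun j => (F j).obj₃)⟩⟩

end Aux

theorem smd_star_smd (A B : Set C) :
    smd C (star C (smd C A) (smd C B)) = smd C (star C A B) := by
  apply Set.Subset.antisymm
  · rintro Y ⟨Y', X, ⟨a, b, u, v, w, ⟨a', abar, ha, ⟨ea⟩⟩, ⟨b', bbar, hb, ⟨eb⟩⟩, hT⟩, ⟨eY⟩⟩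
    obtain ⟨S₁, hS₁, ⟨e₁₁⟩, ⟨e₁₂⟩, ⟨e₁₃⟩⟩ :=
      biprodTriangle_distinguished (Triangle.mk u v w) (contractibleTriangle a') hT
        (contractible_distinguished a')
    obtain ⟨S₂, hS₂, ⟨e₂₁⟩, ⟨e₂₂⟩, ⟨e₂₃⟩⟩ :=
      biprodTriangle_distinguished S₁ (Triangle.mk (0 : (0:C) ⟶ b') (𝟙 b') 0) hS₁
        (contractible_distinguished₁ b')
    -- e₁₁ : S₁.obj₁ ≅ a ⊞ a', e₁₂ : S₁.obj₂ ≅ X ⊞ a', e₁₃ : S₁.obj₃ ≅ b ⊞ 0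
    -- e₂₁ : S₂.obj₁ ≅ S₁.obj₁ ⊞ 0, e₂₂ : S₂.obj₂ ≅ S₁.obj₂ ⊞ b', e₂₃ : S₂.obj₃ ≅ S₁.obj₃ ⊞ b'
    let f₁ : S₂.obj₁ ≅ abar :=
      e₂₁ ≪≫ (isoBiprodZero (isZero_zero C)).symm ≪≫ e₁₁ ≪≫ ea
    let f₃ : S₂.obj₃ ≅ bbar :=
      e₂₃ ≪≫ biprod.mapIso (e₁₃ ≪≫ (isoBiprodZero (isZero_zero C)).symm) (Iso.refl b') ≪≫ eb
    refine ⟨Y' ⊞ (a' ⊞ b'), S₂.obj₂,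
      ⟨abar, bbar, _, _, _, ha, hb, dist_of_isos S₂ hS₂ f₁ (Iso.refl S₂.obj₂) f₃⟩, ⟨?_⟩⟩
    exact (biprod.associator Y Y' (a' ⊞ b')).symm ≪≫ biprod.mapIso eY (Iso.refl _) ≪≫
      (biprod.associator X a' b').symm ≪≫ biprod.mapIso e₁₂.symm (Iso.refl b') ≪≫ e₂₂.symm
  · rintro Y ⟨Y', X, ⟨a, b, u, v, w, ha, hb, hT⟩, ⟨eY⟩⟩
    exact ⟨Y', X, ⟨a, b, u, v, w,
      ⟨0, a, ha, ⟨(isoBiprodZero (isZero_zero C)).symm⟩⟩,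
      ⟨0, b, hb, ⟨(isoBiprodZero (isZero_zero C)).symm⟩⟩, hT⟩, ⟨eY⟩⟩
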